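/- Let m ≥ 2 be even, n = 3m, K = 3, Δ > 0 and γ₊ > γ₋ > 0 with m·Δ² < 2·(γ₊ − γ₋). Let 𝒢 = {G₁, G₂, G₃} be the partition of {1,…,n} into three consecutive blocks of size m, with characteristic matrix B*. Set Λ := (Δ²·m/2)·B* (which is the Gram matrix of means when μ₁, μ₂, μ₃ are pairwise orthogonal of norm Δ/√2, so that ρ(𝒢,μ,0) = +∞ and Δ(μ) = Δ), and let Γ be the diagonal matrix with Γ_{aa} = γ₊ for a ∈ G₁ and Γ_{aa} = γ₋ otherwise, so |Γ|_V = γ₊ − γ₋. Let B₁ be the characteristic matrix of the partition of {1,…,n} that splits G₁ into two halves of size m/2 and merges G₂ ∪ G₃ into one group of size 2m. Then B₁ ∈ C_K^{0,1} and ⟨Λ + Γ, B₁⟩ > ⟨Λ + Γ, B*⟩; in particular B* is not a maximizer of ⟨Λ + Γ, B⟩ over C_K^{0,1}, nor over C_K. -/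

import Mathlib

open MeasureTheory ProbabilityTheory Matrix Real

noncomputable section

namespace Clustering

/-- Euclidean norm of a (finitely indexed) real vector. -/
def vnorm {ι : Type*} [Fintype ι] (v : ι → ℝ) : ℝ := Real.sqrt (∑ i, v i ^ 2)

/-- Euclidean inner product. -/
def vdot {ι : Type*} [Fintype ι] (u v : ι → ℝ) : ℝ := ∑ i, u i * v i

/-- Frobenius norm of a matrix. -/
def frobNorm {ι κ : Type*} [Fintype ι] [Fintype κ] (M : Matrix ι κ ℝ) : ℝ :=
  Real.sqrt (∑ i, ∑ j, M i j ^ 2)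

/-- Operator (`ℓ₂ → ℓ₂` spectral) norm of a matrix. -/
def opNorm {ι κ : Type*} [Fintype ι] [Fintype κ] (M : Matrix ι κ ℝ) : ℝ :=
  sSup {r | ∃ x : κ → ℝ, vnorm x ≤ 1 ∧ r = vnorm (M.mulVec x)}

/-- Nuclear norm: the sum of the singular values, i.e. of the square roots of the
eigenvalues of `Mᴴ * M`. -/
def nuclearNorm {ι : Type*} [Fintype ι] [DecidableEq ι] (M : Matrix ι ι ℝ) : ℝ :=
  ∑ i, Real.sqrt ((show (Mᵀ * M).IsHermitian by
    simpa using Matrix.isHermitian_conjTranspose_mul_self M).eigenvalues i)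

/-- Entrywise supremum norm. -/
def infNorm {ι κ : Type*} [Fintype ι] [Fintype κ] (M : Matrix ι κ ℝ) : ℝ :=
  ⨆ i, ⨆ j, |M i j|

/-- Variation semi-norm of (the diagonal of) a matrix: the difference between the largest
and the smallest diagonal entry. -/
def varSeminorm {ι : Type*} [Fintype ι] (M : Matrix ι ι ℝ) : ℝ :=
  (⨆ i, M i i) - ⨅ i, M i i

/-- Frobenius (entrywise) inner product of two square matrices. -/
def mip {ι : Type*} [Fintype ι] (A B : Matrix ι ι ℝ) : ℝ := ∑ a, ∑ b, A a b * B a b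

/-- `G` is a partition of `{1,…,n}` into `K` (nonempty) groups. -/
def IsPartition {n K : ℕ} (G : Fin K → Finset (Fin n)) : Prop :=
  (∀ a : Fin n, ∃! k, a ∈ G k) ∧ ∀ k, (G k).Nonempty

/-- Characteristic matrix `B*` of a partition. -/
def charMatrix {n K : ℕ} (G : Fin K → Finset (Fin n)) : Matrix (Fin n) (Fin n) ℝ :=
  fun a b => ∑ k, if a ∈ G k ∧ b ∈ G k then ((G k).card : ℝ)⁻¹ else 0

/-- Minimal cluster size `m`. -/
def minCard {n K : ℕ} (G : Fin K → Finset (Fin n)) : ℕ := sInf {m | ∃ k, m = (G k).card}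

/-- `|B_{G_k G_l}|₁`, the entrywise `ℓ¹`-norm of block `(k,l)` of `B`. -/
def blockL1 {n K : ℕ} (G : Fin K → Finset (Fin n)) (k l : Fin K)
    (B : Matrix (Fin n) (Fin n) ℝ) : ℝ :=
  ∑ a ∈ G k, ∑ b ∈ G l, |B a b|

/-- `∑_{1 ≤ k ≠ l ≤ K} |B_{G_k G_l}|₁`. -/
def offDiagSum {n K : ℕ} (G : Fin K → Finset (Fin n)) (B : Matrix (Fin n) (Fin n) ℝ) : ℝ :=
  ∑ k, ∑ l, if k = l then 0 else blockL1 G k l B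

/-- The (population) means `ν` are `(𝒢, μ, δ)`-clustered. -/
def IsClustered {n p K : ℕ} (ν : Fin n → Fin p → ℝ) (G : Fin K → Finset (Fin n))
    (μcl : Fin K → Fin p → ℝ) (δ : ℝ) : Prop :=
  IsPartition G ∧ 0 ≤ δ ∧ ∀ k, ∀ a ∈ G k, vnorm (fun i => ν a i - μcl k i) ≤ δ

/-- Separation `Δ(μ) = min_{k ≠ l} |μ_k - μ_l|₂` between the cluster means. -/
def Delta {p K : ℕ} (μcl : Fin K → Fin p → ℝ) : ℝ :=
  sInf {r | ∃ k l : Fin K, k ≠ l ∧ r = vnorm (fun i => μcl k i - μcl l i)}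

variable {Ω : Type*} [MeasurableSpace Ω]

/-- Mean (expectation) of a random vector, componentwise. -/
def mean {ι : Type*} [Fintype ι] (P : Measure Ω) (X : Ω → ι → ℝ) : ι → ℝ :=
  fun i => ∫ ω, X ω i ∂P

/-- `Y ~ subg(S)`: `Y` is subgaussian with variance-bounding matrix `S`. -/
def IsSubg {ι : Type*} [Fintype ι] (P : Measure Ω) (Y : Ω → ι → ℝ)
    (S : Matrix ι ι ℝ) : Prop :=
  ∀ x : ι → ℝ,
    ∫ ω, Real.exp (vdot x fun i => Y ω i - mean P Y i) ∂P ≤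
      Real.exp (vdot x (S.mulVec x) / 2)

/-- Observed Gram matrix `Λ̂`. -/
def gramHat {n p : ℕ} (X : Fin n → Ω → Fin p → ℝ) (ω : Ω) : Matrix (Fin n) (Fin n) ℝ :=
  fun a b => vdot (X a ω) (X b ω)

/-- Noise `E_a = X_a - ν_a`. -/
def noiseE {n p : ℕ} (P : Measure Ω) (X : Fin n → Ω → Fin p → ℝ) (a : Fin n) (ω : Ω) :
    Fin p → ℝ := fun i => X a ω i - mean P (X a) i

/-- `Γ = Diag(E[|X_a − ν_a|₂²])ₐ`. -/
def gammaMat {n p : ℕ} (P : Measure Ω) (X : Fin n → Ω → Fin p → ℝ) :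
    Matrix (Fin n) (Fin n) ℝ :=
  Matrix.diagonal fun a => ∫ ω, vnorm (noiseE P X a ω) ^ 2 ∂P

/-- `(W₄)_{ab} = ⟨E_a, E_b⟩ − Γ_{ab}`. -/
def W4mat {n p : ℕ} (P : Measure Ω) (X : Fin n → Ω → Fin p → ℝ) (ω : Ω) :
    Matrix (Fin n) (Fin n) ℝ :=
  fun a b => vdot (noiseE P X a ω) (noiseE P X b ω) - gammaMat P X a b

/-- `σ² := maxₐ |Σ_a|_op`. -/
def sigma2 {n p : ℕ} (Sg : Fin n → Matrix (Fin p) (Fin p) ℝ) : ℝ := ⨆ a, opNorm (Sg a)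

/-- `𝒱² := maxₐ |Σ_a|_F`. -/
def Vfrob2 {n p : ℕ} (Sg : Fin n → Matrix (Fin p) (Fin p) ℝ) : ℝ := ⨆ a, frobNorm (Sg a)

/-- `γ² := maxₐ |Σ_a|_*`. -/
def gamma2 {n p : ℕ} (Sg : Fin n → Matrix (Fin p) (Fin p) ℝ) : ℝ := ⨆ a, nuclearNorm (Sg a)

/-- `σ_k² := max_{a ∈ G_k} |Σ_a|_op`. -/
def sigma2On {n p K : ℕ} (Sg : Fin n → Matrix (Fin p) (Fin p) ℝ)
    (G : Fin K → Finset (Fin n)) (k : Fin K) : ℝ :=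
  ⨆ a : {a // a ∈ G k}, opNorm (Sg a.1)

/-- `V(a,b) = max_{(c,d) ∈ ([n]∖{a,b})²} |⟨X_a − X_b, (X_c − X_d)/|X_c − X_d|₂⟩|`. -/
def Vstat {n p : ℕ} (X : Fin n → Ω → Fin p → ℝ) (ω : Ω) (a b : Fin n) : ℝ :=
  ⨆ c : Fin n, ⨆ d : Fin n,
    if c ≠ a ∧ c ≠ b ∧ d ≠ a ∧ d ≠ b then
      |vdot (fun i => X a ω i - X b ω i)
          (fun i => (X c ω i - X d ω i) / vnorm (fun j => X c ω j - X d ω j))|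
    else 0

/-- A minimizer of `f` over the finite set `s`. -/
def argminOn {n : ℕ} [NeZero n] (s : Finset (Fin n)) (f : Fin n → ℝ) : Fin n :=
  if h : s.Nonempty then (Finset.exists_min_image s f h).choose else 0

/-- `b₁ = argmin_{b ≠ a} V(a,b)`. -/
def bOne {n p : ℕ} [NeZero n] (X : Fin n → Ω → Fin p → ℝ) (ω : Ω) (a : Fin n) : Fin n :=
  argminOn (Finset.univ.erase a) fun b => Vstat X ω a b

/-- `b₂ = argmin_{b ∉ {a, b₁}} V(a,b)`. -/
def bTwo {n p : ℕ} [NeZero n] (X : Fin n → Ω → Fin p → ℝ) (ω : Ω) (a : Fin n) : Fin n :=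
  argminOn ((Finset.univ.erase a).erase (bOne X ω a)) fun b => Vstat X ω a b

/-- The corrected estimator `Γ̂^corr = Diag(⟨X_a − X_{b₁}, X_a − X_{b₂}⟩)ₐ`. -/
def gammaCorr {n p : ℕ} [NeZero n] (X : Fin n → Ω → Fin p → ℝ) (ω : Ω) :
    Matrix (Fin n) (Fin n) ℝ :=
  Matrix.diagonal fun a =>
    vdot (fun i => X a ω i - X (bOne X ω a) ω i) fun i => X a ω i - X (bTwo X ω a) ω i

/-- `C_K^{0,1}`. -/
def CK01 (n K : ℕ) : Set (Matrix (Fin n) (Fin n) ℝ) :=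
  {B | (∀ a b, 0 ≤ B a b) ∧ B.IsSymm ∧ B.trace = (K : ℝ) ∧
    (B.mulVec fun _ => 1) = (fun _ => 1) ∧ B * B = B}

/-- `C_K`. -/
def CKset (n K : ℕ) : Set (Matrix (Fin n) (Fin n) ℝ) :=
  {B | (∀ a b, 0 ≤ B a b) ∧ B.IsSymm ∧ B.trace = (K : ℝ) ∧
    (B.mulVec fun _ => 1) = (fun _ => 1) ∧ B.PosSemidef}

/-- `C = ⋃_K C_K`. -/
def Cset (n : ℕ) : Set (Matrix (Fin n) (Fin n) ℝ) := ⋃ K : ℕ, CKset n K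

/-- `B₀` is the unique maximizer of `B ↦ ⟨M, B⟩` over `S`. -/
def UniqueMaxOn {n : ℕ} (M : Matrix (Fin n) (Fin n) ℝ)
    (S : Set (Matrix (Fin n) (Fin n) ℝ)) (B0 : Matrix (Fin n) (Fin n) ℝ) : Prop :=
  B0 ∈ S ∧ ∀ B ∈ S, B ≠ B0 → mip M B < mip M B0

/-- `B₀` is the unique maximizer of the `κ`-penalized objective `B ↦ ⟨M, B⟩ − κ·tr B` over `S`. -/
def UniqueMaxPen {n : ℕ} (M : Matrix (Fin n) (Fin n) ℝ) (κ : ℝ)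
    (S : Set (Matrix (Fin n) (Fin n) ℝ)) (B0 : Matrix (Fin n) (Fin n) ℝ) : Prop :=
  B0 ∈ S ∧ ∀ B ∈ S, B ≠ B0 → mip M B - κ * B.trace < mip M B0 - κ * B0.trace


/-- Population Gram matrix `Λ = (⟨ν_a, ν_b⟩)_{a,b}`. -/
def gramMean {n p : ℕ} (P : Measure Ω) (X : Fin n → Ω → Fin p → ℝ) :
    Matrix (Fin n) (Fin n) ℝ :=
  fun a b => vdot (mean P (X a)) (mean P (X b))

/-- The partition of `{1,…,3m}` into three consecutive blocks of size `m`. -/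
def blockPartition (m : ℕ) : Fin 3 → Finset (Fin (3 * m)) :=
  fun k => Finset.univ.filter fun a => a.val / m = k.val

/-- The partition of `{1,…,3m}` splitting the first block into two halves and merging the
last two blocks. -/
def splitPartition (m : ℕ) : Fin 3 → Finset (Fin (3 * m)) :=
  fun k => Finset.univ.filter fun a =>
    (k = 0 ∧ a.val < m / 2) ∨ (k = 1 ∧ m / 2 ≤ a.val ∧ a.val < m) ∨ (k = 2 ∧ m ≤ a.val)

/-- The population objective matrix `Λ + Γ` of the counterexample. -/
def cexObjective (m : ℕ) (Δ γp γm : ℝ) : Matrix (Fin (3 * m)) (Fin (3 * m)) ℝ :=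
  (Δ ^ 2 * m / 2) • charMatrix (blockPartition m) +
    Matrix.diagonal fun a => if a.val < m then γp else γm

/-!
Write `c = Δ²m/2`, so that `⟨Λ + Γ, B⟩ = c ⟨B*, B⟩ + ⟨Γ, B⟩`. For a characteristic matrix,
`⟨Γ, B⟩` is the sum over the groups of the average of `Γ` on the group: `γ₊ + 2γ₋` for
`B*`, but `2γ₊ + γ₋` for `B₁`, which spends two groups on the noisy block `G₁`. On the
signal side `⟨B*, B*⟩ = tr B* = 3` while `⟨B*, B₁⟩ = 2`, so `B₁` loses only `c < γ₊ − γ₋`.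
-/

open Finset

section Mip

variable {ι : Type*} [Fintype ι]

lemma mip_add_left (A B C : Matrix ι ι ℝ) : mip (A + B) C = mip A C + mip B C := by
  simp only [mip, Matrix.add_apply, add_mul, sum_add_distrib]

lemma mip_smul_left (c : ℝ) (A B : Matrix ι ι ℝ) : mip (c • A) B = c * mip A B := by
  simp only [mip, Matrix.smul_apply, smul_eq_mul, mul_sum, mul_assoc]

lemma mip_diagonal_left [DecidableEq ι] (d : ι → ℝ) (B : Matrix ι ι ℝ) :
    mip (diagonal d) B = ∑ a, d a * B a a := by
  simp [mip, diagonal_apply, ite_mul]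

end Mip

lemma mip_self_of_mem_CK01 {n K : ℕ} {B : Matrix (Fin n) (Fin n) ℝ} (hB : B ∈ CK01 n K) :
    mip B B = K := by
  obtain ⟨-, hsymm, htr, -, hidem⟩ := hB
  calc mip B B = (B * B).trace := by
        simp only [mip, trace, diag_apply, mul_apply]
        exact sum_congr rfl fun a _ => sum_congr rfl fun b _ => by rw [hsymm.apply b a]
    _ = K := by rw [hidem, htr]

lemma CK01_subset_CKset (n K : ℕ) : CK01 n K ⊆ CKset n K := by
  rintro B ⟨hnonneg, hsymm, htr, hone, hidem⟩
  have hgram : Bᴴ * B = B := by rw [conjTranspose_eq_transpose_of_trivial, hsymm.eq, hidem]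
  exact ⟨hnonneg, hsymm, htr, hone, hgram ▸ posSemidef_conjTranspose_mul_self B⟩

lemma card_eq_sub_of_mem_iff {n lo hi : ℕ} {s : Finset (Fin n)} (hhi : hi ≤ n)
    (hs : ∀ a : Fin n, a ∈ s ↔ lo ≤ a.val ∧ a.val < hi) : #s = hi - lo := by
  have hs' : s = (Ico lo hi).attachFin fun i hi' => by rw [mem_Ico] at hi'; omega := by
    ext a
    simp [hs]
  rw [hs', card_attachFin, Nat.card_Ico]

section CharMatrix

variable {n K : ℕ} {G : Fin K → Finset (Fin n)}

lemma isPartition_of_mem_iff (f : Fin n → Fin K) (hG : ∀ k a, a ∈ G k ↔ f a = k)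
    (hf : Function.Surjective f) : IsPartition G :=
  ⟨fun a => ⟨f a, (hG _ a).2 rfl, fun k hk => ((hG k a).1 hk).symm⟩,
    fun k => (hf k).imp fun a ha => (hG k a).2 ha⟩

lemma IsPartition.eq_of_mem (hG : IsPartition G) {a : Fin n} {k l : Fin K} (hk : a ∈ G k)
    (hl : a ∈ G l) : k = l :=
  (hG.1 a).unique hk hl

lemma charMatrix_apply_of_mem (hG : IsPartition G) {a : Fin n} {k : Fin K} (ha : a ∈ G k)
    (b : Fin n) : charMatrix G a b = if b ∈ G k then ((#(G k) : ℕ) : ℝ)⁻¹ else 0 := by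
  rw [charMatrix, sum_eq_single k]
  · simp [ha]
  · exact fun l _ hlk => if_neg fun h => hlk (hG.eq_of_mem h.1 ha)
  · simp

lemma charMatrix_nonneg (G : Fin K → Finset (Fin n)) (a b : Fin n) : 0 ≤ charMatrix G a b :=
  sum_nonneg fun k _ => by split_ifs <;> positivity

lemma charMatrix_isSymm (G : Fin K → Finset (Fin n)) : (charMatrix G).IsSymm :=
  IsSymm.ext fun _ _ => sum_congr rfl fun _ _ => if_congr and_comm rfl rfl

lemma sum_mul_charMatrix_diag {d : Fin n → ℝ} {c : Fin K → ℝ} (hne : ∀ k, (G k).Nonempty)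
    (hd : ∀ k, ∀ a ∈ G k, d a = c k) : ∑ a, d a * charMatrix G a a = ∑ k, c k := by
  simp only [charMatrix, and_self, mul_sum, mul_ite, mul_zero]
  rw [sum_comm]
  refine sum_congr rfl fun k _ => ?_
  rw [sum_ite_mem, univ_inter, sum_congr rfl fun a ha => by rw [hd k a ha], sum_const,
    nsmul_eq_mul]
  field_simp [(hne k).card_pos.ne']

lemma charMatrix_trace (hne : ∀ k, (G k).Nonempty) : (charMatrix G).trace = K := by
  simpa [trace] using sum_mul_charMatrix_diag (d := 1) (c := 1) hne fun _ _ _ => rfl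

lemma charMatrix_mulVec_one (hG : IsPartition G) :
    (charMatrix G).mulVec (fun _ => 1) = fun _ => 1 := by
  funext a
  obtain ⟨k, ha, -⟩ := hG.1 a
  simp only [mulVec, dotProduct, mul_one, charMatrix_apply_of_mem hG ha, sum_ite_mem, univ_inter,
    sum_const, nsmul_eq_mul]
  exact mul_inv_cancel₀ (Nat.cast_ne_zero.2 (hG.2 k).card_pos.ne')

lemma charMatrix_mul_self (hG : IsPartition G) : charMatrix G * charMatrix G = charMatrix G := by
  ext a b
  obtain ⟨k, ha, -⟩ := hG.1 a
  have hrow : ∀ c ∈ G k, charMatrix G c b = charMatrix G a b := fun c hc => by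
    rw [charMatrix_apply_of_mem hG hc, charMatrix_apply_of_mem hG ha]
  calc (charMatrix G * charMatrix G) a b
      = ∑ c ∈ G k, ((#(G k) : ℕ) : ℝ)⁻¹ * charMatrix G c b := by
        simp only [mul_apply, charMatrix_apply_of_mem hG ha, ite_mul, zero_mul, sum_ite_mem,
          univ_inter]
    _ = ∑ c ∈ G k, ((#(G k) : ℕ) : ℝ)⁻¹ * charMatrix G a b :=
        sum_congr rfl fun c hc => by rw [hrow c hc]
    _ = charMatrix G a b := by
        rw [sum_const, nsmul_eq_mul, ← mul_assoc,
          mul_inv_cancel₀ (Nat.cast_ne_zero.2 (hG.2 k).card_pos.ne'), one_mul]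

lemma charMatrix_mem_CK01 (hG : IsPartition G) : charMatrix G ∈ CK01 n K :=
  ⟨charMatrix_nonneg G, charMatrix_isSymm G, charMatrix_trace hG.2, charMatrix_mulVec_one hG,
    charMatrix_mul_self hG⟩

lemma mip_charMatrix {L : ℕ} (G : Fin K → Finset (Fin n)) (H : Fin L → Finset (Fin n)) :
    mip (charMatrix G) (charMatrix H) =
      ∑ k, ∑ l, (#(G k ∩ H l) : ℝ) ^ 2 / (#(G k) * #(H l)) := by
  have hprod : ∀ a b, charMatrix G a b * charMatrix H a b = ∑ k, ∑ l,
      (if a ∈ G k ∩ H l then ((#(G k) : ℕ) : ℝ)⁻¹ else 0) *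
        (if b ∈ G k ∩ H l then ((#(H l) : ℕ) : ℝ)⁻¹ else 0) := fun a b => by
    rw [charMatrix, charMatrix, sum_mul_sum]
    refine sum_congr rfl fun k _ => sum_congr rfl fun l _ => ?_
    simp only [mem_inter]
    split_ifs <;> first | rfl | simp_all
  simp only [mip, hprod]
  simp_rw [sum_comm (s := (univ : Finset (Fin n))) (t := (univ : Finset (Fin K))),
    sum_comm (s := (univ : Finset (Fin n))) (t := (univ : Finset (Fin L))), ← sum_mul_sum,
    sum_ite_mem, univ_inter, sum_const, nsmul_eq_mul]
  refine sum_congr rfl fun k _ => sum_congr rfl fun l _ => ?_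
  ring

end CharMatrix

lemma varSeminorm_diagonal_ite {ι : Type*} [Fintype ι] [DecidableEq ι] (p : ι → Prop)
    [DecidablePred p] {x y : ℝ} (hyx : y ≤ x) (hp : ∃ i, p i) (hnp : ∃ i, ¬ p i) :
    varSeminorm (diagonal fun i => if p i then x else y) = x - y := by
  obtain ⟨i, hi⟩ := hp
  obtain ⟨j, hj⟩ := hnp
  have : Nonempty ι := ⟨i⟩
  have hle : ∀ k, (if p k then x else y) ≤ x := fun k => by split_ifs <;> simp [hyx]
  have hge : ∀ k, y ≤ (if p k then x else y) := fun k => by split_ifs <;> simp [hyx]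
  simp only [varSeminorm, diagonal_apply_eq]
  rw [ciSup_eq_of_forall_le_of_forall_lt_exists_gt hle fun w hw => ⟨i, by simpa [hi] using hw⟩,
    ciInf_eq_of_forall_ge_of_forall_gt_exists_lt hge fun w hw => ⟨j, by simpa [hj] using hw⟩]

section Counterexample

variable {m : ℕ}

lemma mem_blockPartition (hm : 0 < m) {k : Fin 3} {a : Fin (3 * m)} :
    a ∈ blockPartition m k ↔ k * m ≤ a.val ∧ a.val < k * m + m := by
  simp only [blockPartition, mem_filter, mem_univ, true_and, Nat.div_eq_iff hm]
  omega

lemma blockPartition_isPartition (hm : 0 < m) : IsPartition (blockPartition m) :=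
  isPartition_of_mem_iff (fun a => ⟨a / m, Nat.div_lt_of_lt_mul (by linarith [a.isLt])⟩)
    (fun k a => by simp [blockPartition, Fin.ext_iff, eq_comm])
    fun k => ⟨⟨k * m, by nlinarith [k.isLt]⟩, Fin.ext (Nat.mul_div_cancel _ hm)⟩

lemma splitPartition_isPartition (hm : 2 ≤ m) : IsPartition (splitPartition m) :=
  isPartition_of_mem_iff (fun a => if a.val < m / 2 then 0 else if a.val < m then 1 else 2)
    (fun k a => by fin_cases k <;> simp [splitPartition] <;> split_ifs <;> omega)
    fun k => by
      fin_cases k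
      · exact ⟨⟨0, by omega⟩, if_pos (show 0 < m / 2 by omega)⟩
      · exact ⟨⟨m / 2, by omega⟩,
          (if_neg (lt_irrefl _)).trans (if_pos (show m / 2 < m by omega))⟩
      · exact ⟨⟨m, by omega⟩,
          (if_neg (show ¬m < m / 2 by omega)).trans (if_neg (lt_irrefl _))⟩

lemma card_blockPartition (hm : 0 < m) (k : Fin 3) : #(blockPartition m k) = m := by
  simpa using card_eq_sub_of_mem_iff (by have := k.isLt; nlinarith) fun a => mem_blockPartition hm

lemma mip_charMatrix_blockPartition_splitPartition (hm : 2 ≤ m) :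
    mip (charMatrix (blockPartition m)) (charMatrix (splitPartition m)) = 2 := by
  have hm0 : 0 < m := by omega
  have hH := splitPartition_isPartition hm
  have hH0 : #(splitPartition m 0) = m / 2 := by
    simpa using card_eq_sub_of_mem_iff (lo := 0) (hi := m / 2) (by omega) fun a => by
      simp [splitPartition]
  have hH1 : #(splitPartition m 1) = m - m / 2 :=
    card_eq_sub_of_mem_iff (by omega) fun a => by simp [splitPartition]
  have hH2 : #(splitPartition m 2) = 2 * m := by
    rw [card_eq_sub_of_mem_iff (lo := m) le_rfl fun a => by simp [splitPartition, a.isLt]]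
    omega
  obtain ⟨e00, e01, e02, e10, e11, e12, e20, e21, e22⟩ :
      blockPartition m 0 ∩ splitPartition m 0 = splitPartition m 0 ∧
      blockPartition m 0 ∩ splitPartition m 1 = splitPartition m 1 ∧
      blockPartition m 0 ∩ splitPartition m 2 = ∅ ∧
      blockPartition m 1 ∩ splitPartition m 0 = ∅ ∧
      blockPartition m 1 ∩ splitPartition m 1 = ∅ ∧
      blockPartition m 1 ∩ splitPartition m 2 = blockPartition m 1 ∧
      blockPartition m 2 ∩ splitPartition m 0 = ∅ ∧
      blockPartition m 2 ∩ splitPartition m 1 = ∅ ∧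
      blockPartition m 2 ∩ splitPartition m 2 = blockPartition m 2 := by
    refine ⟨?_, ?_, ?_, ?_, ?_, ?_, ?_, ?_, ?_⟩ <;> ext a <;>
      simp [mem_blockPartition hm0, splitPartition] <;> omega
  have h0 : (#(splitPartition m 0) : ℝ) ≠ 0 := Nat.cast_ne_zero.2 (hH.2 0).card_pos.ne'
  have h1 : (#(splitPartition m 1) : ℝ) ≠ 0 := Nat.cast_ne_zero.2 (hH.2 1).card_pos.ne'
  have hsum : (#(splitPartition m 0) : ℝ) + #(splitPartition m 1) = m := by
    rw [hH0, hH1]; norm_cast; omega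
  rw [mip_charMatrix]
  simp only [Fin.sum_univ_three, e00, e01, e02, e10, e11, e12, e20, e21, e22, card_empty,
    card_blockPartition hm0, hH2]
  push_cast
  rw [← hsum]
  field_simp
  ring

lemma mip_diagonal_charMatrix_blockPartition (hm : 0 < m) (x y : ℝ) :
    mip (diagonal fun a : Fin (3 * m) => if a.val < m then x else y)
      (charMatrix (blockPartition m)) = x + 2 * y := by
  rw [mip_diagonal_left,
    sum_mul_charMatrix_diag (c := ![x, y, y]) (blockPartition_isPartition hm).2]
  · simp only [Fin.sum_univ_three, Matrix.cons_val]
    ring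
  · intro k a ha
    rw [mem_blockPartition hm] at ha
    fin_cases k <;> simp at ha ⊢ <;> omega

lemma mip_diagonal_charMatrix_splitPartition (hm : 2 ≤ m) (x y : ℝ) :
    mip (diagonal fun a : Fin (3 * m) => if a.val < m then x else y)
      (charMatrix (splitPartition m)) = 2 * x + y := by
  rw [mip_diagonal_left,
    sum_mul_charMatrix_diag (c := ![x, x, y]) (splitPartition_isPartition hm).2]
  · simp only [Fin.sum_univ_three, Matrix.cons_val]
    ring
  · intro k a ha
    fin_cases k <;> simp [splitPartition] at ha ⊢ <;> omega

lemma mip_cexObjective_blockPartition (hm : 0 < m) (Δ γp γm : ℝ) :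
    mip (cexObjective m Δ γp γm) (charMatrix (blockPartition m)) =
      3 * (Δ ^ 2 * m / 2) + (γp + 2 * γm) := by
  rw [cexObjective, mip_add_left, mip_smul_left,
    mip_self_of_mem_CK01 (charMatrix_mem_CK01 (blockPartition_isPartition hm)),
    mip_diagonal_charMatrix_blockPartition hm]
  ring

lemma mip_cexObjective_splitPartition (hm : 2 ≤ m) (Δ γp γm : ℝ) :
    mip (cexObjective m Δ γp γm) (charMatrix (splitPartition m)) =
      2 * (Δ ^ 2 * m / 2) + (2 * γp + γm) := by
  rw [cexObjective, mip_add_left, mip_smul_left, mip_charMatrix_blockPartition_splitPartition hm,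
    mip_diagonal_charMatrix_splitPartition hm]
  ring

end Counterexample

theorem counterexample_heteroscedastic_general (m : ℕ) (Δ γp γm : ℝ)
    (hm : 2 ≤ m) (hγ : γm < γp)
    (hcond : (m : ℝ) * Δ ^ 2 < 2 * (γp - γm)) :
    varSeminorm (Matrix.diagonal fun a : Fin (3 * m) =>
        if a.val < m then γp else γm) = γp - γm ∧
    charMatrix (splitPartition m) ∈ CK01 (3 * m) 3 ∧
    mip (cexObjective m Δ γp γm) (charMatrix (blockPartition m)) <
      mip (cexObjective m Δ γp γm) (charMatrix (splitPartition m)) ∧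
    ¬ (∀ B ∈ CK01 (3 * m) 3, mip (cexObjective m Δ γp γm) B ≤
        mip (cexObjective m Δ γp γm) (charMatrix (blockPartition m))) ∧
    ¬ (∀ B ∈ CKset (3 * m) 3, mip (cexObjective m Δ γp γm) B ≤
        mip (cexObjective m Δ γp γm) (charMatrix (blockPartition m))) := by
  have hmem : charMatrix (splitPartition m) ∈ CK01 (3 * m) 3 :=
    charMatrix_mem_CK01 (splitPartition_isPartition hm)
  have hlt : mip (cexObjective m Δ γp γm) (charMatrix (blockPartition m)) <
      mip (cexObjective m Δ γp γm) (charMatrix (splitPartition m)) := by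
    rw [mip_cexObjective_blockPartition (by omega), mip_cexObjective_splitPartition hm]
    linarith
  refine ⟨varSeminorm_diagonal_ite _ hγ.le ⟨⟨0, by omega⟩, show 0 < m by omega⟩
      ⟨⟨m, by omega⟩, lt_irrefl m⟩, hmem, hlt, fun hmax => (hmax _ hmem).not_gt hlt,
    fun hmax => (hmax _ (CK01_subset_CKset _ _ hmem)).not_gt hlt⟩

/-- **Proposition 3.2 (counterexample).** Even with perfectly discriminated population
clusters, a heteroscedastic noise configuration makes `B*` suboptimal for the
(relaxed) K-means objective on the population version. -/
theorem counterexample_heteroscedastic (m : ℕ) (Δ γp γm : ℝ)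
    (hm : 2 ≤ m) (hme : Even m) (hΔ : 0 < Δ) (hγm : 0 < γm) (hγ : γm < γp)
    (hcond : (m : ℝ) * Δ ^ 2 < 2 * (γp - γm)) :
    varSeminorm (Matrix.diagonal fun a : Fin (3 * m) =>
        if a.val < m then γp else γm) = γp - γm ∧
    charMatrix (splitPartition m) ∈ CK01 (3 * m) 3 ∧
    mip (cexObjective m Δ γp γm) (charMatrix (blockPartition m)) <
      mip (cexObjective m Δ γp γm) (charMatrix (splitPartition m)) ∧
    ¬ (∀ B ∈ CK01 (3 * m) 3, mip (cexObjective m Δ γp γm) B ≤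
        mip (cexObjective m Δ γp γm) (charMatrix (blockPartition m))) ∧
    ¬ (∀ B ∈ CKset (3 * m) 3, mip (cexObjective m Δ γp γm) B ≤
        mip (cexObjective m Δ γp γm) (charMatrix (blockPartition m))) :=
  counterexample_heteroscedastic_general m Δ γp γm hm hγ hcond

end Clustering
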